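/- For all positive integers m, n with mn even and all positive integers t, the number of lattice points in the dilate tP(m,n) of the perfect matching polytope P(m,n) of the grid graph G(m,n) equals T(m,n,t), the number of magic labellings of sum t of G(m,n). -/

import Mathlib

open Finset Pointwise

/-- The perfect matching polytope of a graph `G`: the convex hull in `ℝ^{Sym2 V}`
of the 0/1 incidence vectors of the perfect matchings of `G`. -/
noncomputable def pmPolytope {V : Type*} (G : SimpleGraph V) : Set (Sym2 V → ℝ) :=
  convexHull ℝ
    {x | ∃ M : G.Subgraph, M.IsPerfectMatching ∧ x = Set.indicator M.edgeSet 1}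

/-- The number of lattice points in the dilate `t • P`. -/
noncomputable def latticeCount {ι : Type*} (P : Set (ι → ℝ)) (t : ℕ) : ℕ :=
  Nat.card {x : ι → ℤ // (fun i => (x i : ℝ)) ∈ (t : ℝ) • P}

/-- The number of lattice points in the relative interior of the dilate `t • P`. -/
noncomputable def interiorLatticeCount {ι : Type*} (P : Set (ι → ℝ)) (t : ℕ) : ℕ :=
  Nat.card {x : ι → ℤ // (fun i => (x i : ℝ)) ∈ intrinsicInterior ℝ ((t : ℝ) • P)}

/-- A polytope `P` is Gorenstein of index `k` if `L_{P°}(t) = 0` for `0 < t < k`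
and `L_{P°}(t) = L_P(t - k)` for all `t ≥ k`. -/
def IsGorensteinOfIndex {ι : Type*} (P : Set (ι → ℝ)) (k : ℕ) : Prop :=
  (∀ t : ℕ, 0 < t → t < k → interiorLatticeCount P t = 0) ∧
  ∀ t : ℕ, k ≤ t → interiorLatticeCount P t = latticeCount P (t - k)

/-- The `m × n` grid graph: vertices `(i, j)` with `0 ≤ i < n`, `0 ≤ j < m`,
adjacent iff `|i - i'| + |j - j'| = 1`. -/
def gridGraph (m n : ℕ) : SimpleGraph (Fin n × Fin m) where
  Adj p q := Nat.dist p.1.val q.1.val + Nat.dist p.2.val q.2.val = 1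
  symm := by
    constructor
    intro p q h
    simpa [Nat.dist_comm] using h
  loopless := by
    constructor
    intro p h
    simp [Nat.dist_self] at h

/-- The `m × n` torus graph: the grid graph together with the wrap-around edges
`{(0,j),(n-1,j)}` and `{(i,0),(i,m-1)}`. -/
def torusGraph (m n : ℕ) : SimpleGraph (Fin n × Fin m) where
  Adj p q := p ≠ q ∧
    (Nat.dist p.1.val q.1.val + Nat.dist p.2.val q.2.val = 1 ∨
     (p.2 = q.2 ∧ ((p.1.val = 0 ∧ q.1.val = n - 1) ∨ (p.1.val = n - 1 ∧ q.1.val = 0))) ∨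
     (p.1 = q.1 ∧ ((p.2.val = 0 ∧ q.2.val = m - 1) ∨ (p.2.val = m - 1 ∧ q.2.val = 0))))
  symm := by
    constructor
    rintro p q ⟨hne, h⟩
    refine ⟨hne.symm, ?_⟩
    rcases h with h | ⟨h1, h2⟩ | ⟨h1, h2⟩
    · exact Or.inl (by simpa [Nat.dist_comm] using h)
    · exact Or.inr (Or.inl ⟨h1.symm, by tauto⟩)
    · exact Or.inr (Or.inr ⟨h1.symm, by tauto⟩)
  loopless := ⟨fun p h => h.1 rfl⟩

/-- A magic labelling of sum `t` of a graph `G`: a nonnegative integer label on each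
edge (zero on non-edges) such that at every vertex the incident labels sum to `t`. -/
def IsMagicLabelling {V : Type*} [Fintype V] [DecidableEq V]
    (G : SimpleGraph V) (x : Sym2 V → ℕ) (t : ℕ) : Prop :=
  (∀ e, e ∉ G.edgeSet → x e = 0) ∧
  ∀ v : V, ∑ e ∈ Finset.univ.filter (fun e : Sym2 V => v ∈ e), x e = t

/-- `T m n t` is the number of magic labellings of sum `t` of the grid graph `G(m,n)`. -/
noncomputable def T (m n t : ℕ) : ℕ :=
  Nat.card {x : Sym2 (Fin n × Fin m) → ℕ // IsMagicLabelling (gridGraph m n) x t}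

/-- The dimension of a polytope: the dimension of its affine hull. -/
noncomputable def polytopeDim {ι : Type*} (P : Set (ι → ℝ)) : ℕ :=
  Module.finrank ℝ (vectorSpan ℝ P)

/-- `(h 0, …, h k)` is the Ehrhart h-vector of a `d`-dimensional integral polytope `P`:
`∑_{t ≥ 0} L_P(t) z^t = (h_0 + h_1 z + ⋯ + h_k z^k)/(1 - z)^{d+1}` with `h k ≠ 0`,
expressed coefficientwise via `1/(1-z)^{d+1} = ∑_t C(t+d, d) z^t`. -/
def IsEhrhartHVector {ι : Type*} (P : Set (ι → ℝ)) (d : ℕ) (h : ℕ → ℤ) (k : ℕ) : Prop :=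
  h k ≠ 0 ∧ (∀ j, k < j → h j = 0) ∧
  ∀ t : ℕ, (latticeCount P t : ℤ) =
    ∑ j ∈ Finset.range (k + 1), h j * ((t + d - j).choose d : ℤ)

/-- A finite sequence `h 0, …, h k` is unimodal. -/
def UnimodalVec (h : ℕ → ℤ) (k : ℕ) : Prop :=
  ∃ j, j ≤ k ∧ (∀ i, i < j → h i ≤ h (i + 1)) ∧ (∀ i, j ≤ i → i < k → h (i + 1) ≤ h i)


/-!
Every point of `P(G)` is a nonnegative weighting of the edges of `G` with all vertex sums `1`,
so a lattice point of `t P(G)` is a magic labelling of sum `t`. Conversely, let `x` be a magic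
labelling of sum `t > 0` of a bipartite graph, such as the grid. A set `S` of vertices carries
total weight `t |S|`, all of it on edges into the neighbourhood `N(S)` of `S` in the support of
`x`, which carries total weight `t |N(S)|`; so the support of `x` satisfies Hall's condition and
contains a perfect matching `M`. Subtracting the indicator of `M` lowers the sum to `t - 1`, and
induction writes `x` as a sum of `t` perfect matchings, a lattice point of `t P(G)`.
-/

def intPointsEquivNatPoints {ι : Type*} {S : Set (ι → ℝ)} (hS : ∀ y ∈ S, 0 ≤ y) :
    {y : ι → ℤ // (fun i => (y i : ℝ)) ∈ S} ≃ {x : ι → ℕ // (fun i => (x i : ℝ)) ∈ S} where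
  toFun y := ⟨fun i => (y.1 i).toNat, by
    convert y.2 using 2 with i
    exact_mod_cast Int.toNat_of_nonneg (Int.cast_nonneg_iff.mp (hS _ y.2 i))⟩
  invFun x := ⟨fun i => x.1 i, by simpa using x.2⟩
  left_inv y :=
    Subtype.ext (funext fun i => Int.toNat_of_nonneg (Int.cast_nonneg_iff.mp (hS _ y.2 i)))
  right_inv x := Subtype.ext (funext fun i => Int.toNat_natCast _)

section MagicLabelling

open SimpleGraph

variable {V : Type*} {G : SimpleGraph V}

theorem SimpleGraph.Subgraph.IsPerfectMatching.indicator_mem_pmPolytope {M : G.Subgraph}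
    (hM : M.IsPerfectMatching) : M.edgeSet.indicator 1 ∈ pmPolytope G :=
  subset_convexHull ℝ _ ⟨M, hM, rfl⟩

variable [Fintype V] [DecidableEq V]

theorem Sym2.sum_filter_mem_eq_sum_mk {M : Type*} [AddCommMonoid M] (v : V) (g : Sym2 V → M) :
    ∑ e ∈ univ.filter (v ∈ ·), g e = ∑ w, g s(v, w) := by
  have : univ.filter (v ∈ ·) = univ.image fun w => s(v, w) := by
    ext e
    simp [Sym2.mem_iff_exists, eq_comm]
  rw [this, sum_image fun _ _ _ _ => Sym2.congr_right.mp]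

/-- For `t = 1` this is the fractional perfect matching polytope of `G`. -/
def realMagicLabellings (G : SimpleGraph V) (t : ℝ) : Set (Sym2 V → ℝ) :=
  {y | (∀ e ∉ G.edgeSet, y e = 0) ∧ (∀ e, 0 ≤ y e) ∧ ∀ v, ∑ e ∈ univ.filter (v ∈ ·), y e = t}

theorem natCast_mem_realMagicLabellings_iff {x : Sym2 V → ℕ} {t : ℕ} :
    (fun e => (x e : ℝ)) ∈ realMagicLabellings G t ↔ IsMagicLabelling G x t := by
  simp only [realMagicLabellings, IsMagicLabelling, Set.mem_ofPred_eq, Nat.cast_eq_zero,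
    Nat.cast_nonneg, implies_true, true_and, ← Nat.cast_sum, Nat.cast_inj]

theorem convex_realMagicLabellings (G : SimpleGraph V) (t : ℝ) :
    Convex ℝ (realMagicLabellings G t) := by
  rintro y ⟨hy₀, hy₁, hy₂⟩ z ⟨hz₀, hz₁, hz₂⟩ a b ha hb hab
  refine ⟨fun e he => by simp [hy₀ e he, hz₀ e he], fun e => ?_, fun v => ?_⟩
  · have := hy₁ e
    have := hz₁ e
    simp only [Pi.add_apply, Pi.smul_apply, smul_eq_mul]
    positivity
  · simp only [Pi.add_apply, Pi.smul_apply, smul_eq_mul, sum_add_distrib, ← mul_sum, hy₂, hz₂,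
      ← add_mul, hab, one_mul]

theorem smul_mem_realMagicLabellings {y : Sym2 V → ℝ} {c s : ℝ} (hc : 0 ≤ c)
    (hy : y ∈ realMagicLabellings G s) : c • y ∈ realMagicLabellings G (c * s) := by
  obtain ⟨hy₀, hy₁, hy₂⟩ := hy
  refine ⟨fun e he => by simp [hy₀ e he], fun e => mul_nonneg hc (hy₁ e), fun v => ?_⟩
  simp only [Pi.smul_apply, smul_eq_mul, ← mul_sum, hy₂]

theorem SimpleGraph.Subgraph.IsPerfectMatching.isMagicLabelling_indicator {M : G.Subgraph}
    (hM : M.IsPerfectMatching) : IsMagicLabelling G (M.edgeSet.indicator 1) 1 := by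
  refine ⟨fun e he => Set.indicator_of_notMem (fun h => he (M.edgeSet_subset h)) _, fun v => ?_⟩
  obtain ⟨w, hw, hw_unique⟩ := hM.1 (hM.2 v)
  rw [Sym2.sum_filter_mem_eq_sum_mk, sum_eq_single w]
  · simp [hw]
  · intro u _ hu
    simpa using fun h => hu (hw_unique u h)
  · simp

theorem natCast_indicator_one {α : Type*} (s : Set α) :
    (fun a => ((s.indicator (1 : α → ℕ) a : ℕ) : ℝ)) = s.indicator 1 := by
  funext a
  by_cases ha : a ∈ s <;> simp [ha]

theorem pmPolytope_subset_realMagicLabellings : pmPolytope G ⊆ realMagicLabellings G 1 := by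
  refine convexHull_min ?_ (convex_realMagicLabellings G 1)
  rintro _ ⟨M, hM, rfl⟩
  simpa only [natCast_indicator_one, Nat.cast_one] using
    natCast_mem_realMagicLabellings_iff.mpr hM.isMagicLabelling_indicator

theorem smul_pmPolytope_subset_realMagicLabellings {t : ℝ} (ht : 0 ≤ t) :
    t • pmPolytope G ⊆ realMagicLabellings G t := by
  rintro _ ⟨y, hy, rfl⟩
  simpa using smul_mem_realMagicLabellings ht (pmPolytope_subset_realMagicLabellings hy)

namespace IsMagicLabelling

variable {x : Sym2 V → ℕ} {t : ℕ}

theorem sum_mk (hx : IsMagicLabelling G x t) (v : V) : ∑ w, x s(v, w) = t := by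
  rw [← Sym2.sum_filter_mem_eq_sum_mk, hx.2 v]

theorem adj_of_ne_zero (hx : IsMagicLabelling G x t) {v w : V} (h : x s(v, w) ≠ 0) :
    G.Adj v w :=
  by_contra fun hvw => h (hx.1 _ hvw)

theorem eq_zero (hx : IsMagicLabelling G x 0) : x = 0 := by
  funext e
  induction e using Sym2.ind with
  | _ v w => exact sum_eq_zero_iff.mp (hx.sum_mk v) w (mem_univ w)

theorem mul_card_le (hx : IsMagicLabelling G x t) {S N : Finset V}
    (hSN : ∀ v ∈ S, ∀ w, x s(v, w) ≠ 0 → w ∈ N) : t * #S ≤ t * #N := by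
  calc t * #S = ∑ v ∈ S, ∑ w ∈ N, x s(v, w) := by
        rw [mul_comm, ← smul_eq_mul, ← sum_const]
        refine sum_congr rfl fun v hv => ?_
        rw [← hx.sum_mk v]
        exact (sum_subset (subset_univ N) fun w _ hw => by_contra (hw ∘ hSN v hv w)).symm
    _ ≤ ∑ v, ∑ w ∈ N, x s(v, w) := sum_le_sum_of_subset (subset_univ S)
    _ = ∑ w ∈ N, ∑ v, x s(w, v) := by
        rw [sum_comm]
        exact sum_congr rfl fun w _ => sum_congr rfl fun v _ => congrArg x Sym2.eq_swap
    _ = t * #N := by simp [hx.sum_mk, mul_comm]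

theorem exists_isPerfectMatching (hG : G.IsBipartite) (hx : IsMagicLabelling G x t)
    (ht : 0 < t) : ∃ M : G.Subgraph, M.IsPerfectMatching ∧ ∀ e ∈ M.edgeSet, x e ≠ 0 := by
  classical
  set H := G.deleteEdges {e | x e = 0}
  have hHG : H ≤ G := deleteEdges_le _
  obtain ⟨p₁, p₂, hp⟩ := IsBipartite.exists_isBipartiteWith (hG.mono_left hHG)
  obtain ⟨M, hM⟩ := exists_isPerfectMatching_of_forall_ncard_le hp fun S => by
    rw [Set.ncard_eq_toFinset_card', Set.ncard_eq_toFinset_card']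
    refine Nat.le_of_mul_le_mul_left (hx.mul_card_le fun v hv w hw => ?_) ht
    simp only [Set.mem_toFinset] at hv ⊢
    exact Set.mem_biUnion hv ((deleteEdges_adj ..).mpr ⟨hx.adj_of_ne_zero hw, hw⟩)
  refine ⟨M.map (Hom.ofLE hHG), ⟨hM.1.map_ofLE hHG, ?_⟩, ?_⟩
  · simp [Subgraph.IsSpanning, hM.2 _]
  · intro e he
    have heH : e ∈ H.edgeSet := M.edgeSet_subset (by simpa using he)
    exact (by simpa [H] using heH : e ∈ G.edgeSet ∧ x e ≠ 0).2

theorem exists_eq_indicator_add (hG : G.IsBipartite) (hx : IsMagicLabelling G x (t + 1)) :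
    ∃ M : G.Subgraph, M.IsPerfectMatching ∧
      ∃ y, IsMagicLabelling G y t ∧ x = M.edgeSet.indicator 1 + y := by
  obtain ⟨M, hM, hxM⟩ := hx.exists_isPerfectMatching hG t.succ_pos
  have hle : M.edgeSet.indicator 1 ≤ x := fun e => by
    by_cases he : e ∈ M.edgeSet <;> simp [he, Nat.one_le_iff_ne_zero, hxM]
  refine ⟨M, hM, x - M.edgeSet.indicator 1, ⟨fun e he => ?_, fun v => ?_⟩,
    (add_tsub_cancel_of_le hle).symm⟩
  · simp [hx.1 e he]
  · rw [Pi.sub_def, sum_tsub_distrib _ fun e _ => hle e, hx.2 v,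
      hM.isMagicLabelling_indicator.2 v, add_tsub_cancel_right]

theorem natCast_mem_smul_pmPolytope (hG : G.IsBipartite) (hP : (pmPolytope G).Nonempty)
    (hx : IsMagicLabelling G x t) : (fun e => (x e : ℝ)) ∈ (t : ℝ) • pmPolytope G := by
  induction t generalizing x with
  | zero =>
    rw [hx.eq_zero, Nat.cast_zero, Set.zero_smul_set hP]
    exact Set.mem_zero.mpr (funext fun _ => Nat.cast_zero)
  | succ t ih =>
    obtain ⟨M, hM, y, hy, rfl⟩ := hx.exists_eq_indicator_add hG
    have hconv : Convex ℝ (pmPolytope G) := convex_convexHull ℝ _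
    rw [Nat.cast_succ, add_comm, hconv.add_smul zero_le_one t.cast_nonneg, one_smul]
    convert Set.add_mem_add hM.indicator_mem_pmPolytope (ih hy) using 1
    simp only [Pi.add_apply, Nat.cast_add, ← natCast_indicator_one]
    rfl

end IsMagicLabelling

theorem natCast_mem_smul_pmPolytope_iff (hG : G.IsBipartite) {x : Sym2 V → ℕ} {t : ℕ}
    (ht : 0 < t) :
    (fun e => (x e : ℝ)) ∈ (t : ℝ) • pmPolytope G ↔ IsMagicLabelling G x t := by
  refine ⟨fun h => natCast_mem_realMagicLabellings_iff.mp
    (smul_pmPolytope_subset_realMagicLabellings t.cast_nonneg h), fun hx => ?_⟩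
  obtain ⟨M, hM, -⟩ := hx.exists_isPerfectMatching hG ht
  exact hx.natCast_mem_smul_pmPolytope hG ⟨_, hM.indicator_mem_pmPolytope⟩

theorem latticeCount_pmPolytope_eq_card_magicLabellings (hG : G.IsBipartite) {t : ℕ}
    (ht : 0 < t) :
    latticeCount (pmPolytope G) t = Nat.card {x : Sym2 V → ℕ // IsMagicLabelling G x t} :=
  Nat.card_congr <| (intPointsEquivNatPoints fun _ hy =>
      (smul_pmPolytope_subset_realMagicLabellings t.cast_nonneg hy).2.1).trans
    (Equiv.subtypeEquivRight fun _ => natCast_mem_smul_pmPolytope_iff hG ht)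

end MagicLabelling

theorem gridGraph_isBipartite (m n : ℕ) : (gridGraph m n).IsBipartite :=
  SimpleGraph.IsBipartiteWith.isBipartite
    (s := {v | (v.1.val + v.2.val) % 2 = 0}) (t := {v | (v.1.val + v.2.val) % 2 = 1})
    { disjoint := Set.disjoint_left.mpr fun v h₀ h₁ => by simp_all
      mem_of_adj := fun v w h => by
        simp only [gridGraph, Nat.dist] at h
        simp only [Set.mem_ofPred_eq]
        omega }

theorem lattice_points_eq_magic_labellings_general (m n t : ℕ) (ht : 0 < t) :
    latticeCount (pmPolytope (gridGraph m n)) t = T m n t :=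
  latticeCount_pmPolytope_eq_card_magicLabellings (gridGraph_isBipartite m n) ht

/-- For `m, n ≥ 1` with `mn` even and `t ≥ 1`, the number of lattice
points of the dilate `t P(m,n)` equals `T(m,n,t)`, the number of magic labellings of
sum `t` of `G(m,n)`. -/
theorem lattice_points_eq_magic_labellings (m n t : ℕ) (hm : 0 < m) (hn : 0 < n)
    (heven : Even (m * n)) (ht : 0 < t) :
    latticeCount (pmPolytope (gridGraph m n)) t = T m n t :=
  lattice_points_eq_magic_labellings_general m n t ht
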